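/- Let ε > 0 be a constant and let p = p_n ∈ (0,1) satisfy p_n·√n/(log n)² → ∞ and eventually p_n ≤ 1−ε. Then there exist constants 0 < c < C such that for all sufficiently large n: c·(log n)/p_n ≤ r_n ≤ C·(log n)/p_n, and c·(log n)²/(p_n·n) ≤ (1−p_n)^(r_n) ≤ C·(log n)²/(p_n·n). In particular r_n ≥ c·log n and r_n·(log n)/√n → 0. -/

import Mathlib

open Filter Real Topology

noncomputable section

/-- The weight (probability) of a particular graph under the Erdős–Rényi measure `G(n,p)`. -/
def erWeight (n : ℕ) (p : ℝ) (G : SimpleGraph (Fin n)) : ℝ :=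
  p ^ G.edgeSet.ncard * (1 - p) ^ (n.choose 2 - G.edgeSet.ncard)

/-- Probability of a set of graphs under the Erdős–Rényi measure `G(n,p)`. -/
def erProb (n : ℕ) (p : ℝ) (S : Set (SimpleGraph (Fin n))) : ℝ :=
  ∑ G : SimpleGraph (Fin n), S.indicator (erWeight n p) G

/-- Expectation of a real random variable on `G(n,p)`. -/
def erExp (n : ℕ) (p : ℝ) (X : SimpleGraph (Fin n) → ℝ) : ℝ :=
  ∑ G : SimpleGraph (Fin n), erWeight n p G * X G

/-- Variance of a real random variable on `G(n,p)`. -/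
def erVar (n : ℕ) (p : ℝ) (X : SimpleGraph (Fin n) → ℝ) : ℝ :=
  erExp n p (fun G => (X G - erExp n p X) ^ 2)

/-- Probability of a set of graphs under the uniform measure `G(n,m)` on graphs with `m` edges. -/
def gnmProb (n m : ℕ) (S : Set (SimpleGraph (Fin n))) : ℝ :=
  (∑ G : SimpleGraph (Fin n),
      (S ∩ {G : SimpleGraph (Fin n) | G.edgeSet.ncard = m}).indicator 1 G) /
  (∑ G : SimpleGraph (Fin n),
      ({G : SimpleGraph (Fin n) | G.edgeSet.ncard = m} : Set (SimpleGraph (Fin n))).indicator 1 G)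

/-- `D` is a dominating set of `G`. -/
def isDomSet {V : Type*} (G : SimpleGraph V) (D : Set V) : Prop :=
  ∀ v ∉ D, ∃ u ∈ D, G.Adj u v

/-- The domination number of a finite graph. -/
def domNumber {V : Type*} [Fintype V] (G : SimpleGraph V) : ℕ :=
  sInf {k | ∃ D : Finset V, D.card = k ∧ isDomSet G ↑D}

/-- The bondage number of a finite graph. -/
def bondage {V : Type*} [Fintype V] (G : SimpleGraph V) : ℕ :=
  sInf {k | ∃ B : Finset (Sym2 V), B.card = k ∧ (↑B : Set (Sym2 V)) ⊆ G.edgeSet ∧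
    domNumber G < domNumber (G.deleteEdges ↑B)}

/-- Maximum degree of a finite graph. -/
def maxDeg {V : Type*} [Fintype V] (G : SimpleGraph V) : ℕ :=
  Finset.univ.sup fun v => (G.neighborSet v).ncard

/-- `f(n,k,p) = C(n,k)·(1−(1−p)^k)^(n−k)`, the expected number of dominating sets of size `k`. -/
def fdom (n k : ℕ) (p : ℝ) : ℝ := (n.choose k : ℝ) * (1 - (1 - p) ^ k) ^ (n - k)

/-- `r = r_n = min {k : f(n,k,p) > 1/(p n)}`. -/
def rdom (n : ℕ) (p : ℝ) : ℕ := sInf {k : ℕ | fdom n k p > 1 / (p * n)}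

/-- Number of dominating sets of cardinality `k`. -/
def numDomSets (n k : ℕ) (G : SimpleGraph (Fin n)) : ℕ :=
  {D : Finset (Fin n) | D.card = k ∧ isDomSet G ↑D}.ncard

/-- Number of dominating sets of cardinality `k` containing the vertex `v`. -/
def numDomSetsVia (n k : ℕ) (v : Fin n) (G : SimpleGraph (Fin n)) : ℕ :=
  {D : Finset (Fin n) | D.card = k ∧ v ∈ D ∧ isDomSet G ↑D}.ncard

/-- `W_i`: number of ordered pairs of dominating sets of cardinality `k` intersecting in `i`
vertices. -/
def numDomPairs (n k i : ℕ) (G : SimpleGraph (Fin n)) : ℕ :=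
  {DD : Finset (Fin n) × Finset (Fin n) | DD.1.card = k ∧ DD.2.card = k ∧
    isDomSet G ↑DD.1 ∧ isDomSet G ↑DD.2 ∧ (DD.1 ∩ DD.2).card = i}.ncard

/-- The graph `G` with the edge `uv` added (if not already present). -/
def addEdge {V : Type*} (G : SimpleGraph V) (u v : V) : SimpleGraph V :=
  G ⊔ SimpleGraph.fromEdgeSet {s(u, v)}

/-- `D̂_j(u,v)`: the number of sets `D` of cardinality `k` with `v ∈ D`, `u ∉ D`, dominating in
`G + uv`, such that `u` has exactly `j` neighbours in `D` in `G + uv`. -/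
def dhat {V : Type*} [Fintype V] (G : SimpleGraph V) (k : ℕ) (u v : V) (j : ℕ) : ℕ :=
  {D : Finset V | D.card = k ∧ v ∈ D ∧ u ∉ D ∧ isDomSet (addEdge G u v) ↑D ∧
    ((addEdge G u v).neighborSet u ∩ ↑D).ncard = j}.ncard

/-- The damage of the directed pair `(u,v)`. -/
def damage {V : Type*} [Fintype V] (G : SimpleGraph V) (k : ℕ) (u v : V) : ℝ :=
  ∑ j ∈ Finset.Icc 1 k, (dhat G k u v j : ℝ) / j

/-- The heavy damage of the directed pair `(u,v)` with threshold `L`. -/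
def heavyDamage {V : Type*} [Fintype V] (G : SimpleGraph V) (k L : ℕ) (u v : V) : ℝ :=
  ∑ j ∈ Finset.Icc 1 L, (dhat G k u v j : ℝ) / j

/-- `P(Bin(m,p) = j)`. -/
def binPMF (m : ℕ) (p : ℝ) (j : ℕ) : ℝ := (m.choose j : ℝ) * p ^ j * (1 - p) ^ (m - j)

/-- `P(Bin(m,p) < t)`. -/
def binLT (m : ℕ) (p : ℝ) (t : ℕ) : ℝ := ∑ j ∈ Finset.range t, binPMF m p j

/-- `Q_i = Σ_{j=0}^{min(i−1,L−1)} P(Bin(i−1,p)=j)·(P(Bin(r−i,p) < L−j))²`. -/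
def Qdef (r L : ℕ) (p : ℝ) (i : ℕ) : ℝ :=
  ∑ j ∈ Finset.range (min i L), binPMF (i - 1) p j * (binLT (r - i) p (L - j)) ^ 2

/-- A set of naturals is dense if `|I ∩ {1,…,n}|/n → 1`. -/
def DenseInNat (I : Set ℕ) : Prop :=
  Tendsto (fun n : ℕ => ((I ∩ Set.Icc 1 n).ncard : ℝ) / n) atTop (𝓝 1)

end

/-!
Write `q = 1 - p` and `L = log n`. From `C(n,k) ≤ n^k` and `1 - x ≤ e^{-x}` one gets
`f(n,k,p) ≤ exp (k L - (n-k) q^k)`, and from `1 - x ≥ e^{-2x}` (for `x ≤ 1/2`) one gets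
`f(n,k,p) ≥ C(n,k) exp (-2 n q^k)`. At `k = ⌈2L/p⌉` we have `q^k ≤ n⁻²`, so `f > 1/(pn)` and
`r ≤ 3L/p ≤ √n/2`. At `k = r` the inequality `1/n ≤ 1/(pn) < f` gives `(n/2) q^r < (r+1) L`,
hence `q^r ≤ 8L²/(pn)`; and if `r < εL/(4p)` then `q^r ≥ e^{-pr/ε} ≥ n^{-1/4}` contradicts it.
At `k = r - 1` we have `f ≤ 1`, so `√n^k ≤ C(n,k) ≤ exp (2 n q^k)`, i.e. `q^{r-1} ≥ (r-1) L/(4n)`,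
which with `r ≥ εL/(4p)` and `q ≥ ε` gives `q^r ≥ ε² L²/(32 p n)`. The remaining claims follow
from `L² ≤ p √n`.
-/

lemma exp_neg_two_mul_le_one_sub {x : ℝ} (hx₀ : 0 ≤ x) (hx : x ≤ 1 / 2) :
    exp (-(2 * x)) ≤ 1 - x := by
  calc exp (-(2 * x)) = (exp (2 * x))⁻¹ := exp_neg _
    _ ≤ (1 + 2 * x)⁻¹ := inv_anti₀ (by positivity) (by linarith [add_one_le_exp (2 * x)])
    _ ≤ 1 - x := by
      rw [inv_le_iff_one_le_mul₀ (by positivity)]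
      nlinarith

lemma exp_neg_div_le_one_sub {ε p : ℝ} (hε : 0 < ε) (hp : 0 ≤ p) (hpε : ε ≤ 1 - p) :
    exp (-(p / ε)) ≤ 1 - p := by
  have hq : 0 < 1 - p := hε.trans_le hpε
  rw [← exp_log hq, exp_le_exp]
  calc -(p / ε) ≤ -(p / (1 - p)) := neg_le_neg (div_le_div_of_nonneg_left hp hε hpε)
    _ = 1 - (1 - p)⁻¹ := by field_simp; ring
    _ ≤ log (1 - p) := one_sub_inv_le_log_of_pos hq

lemma div_pow_le_choose (n k : ℕ) : (((n + 1 - k : ℕ) : ℝ) / k) ^ k ≤ n.choose k := by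
  rcases k.eq_zero_or_pos with rfl | hk
  · simp
  calc (((n + 1 - k : ℕ) : ℝ) / k) ^ k = ((n + 1 - k : ℕ) : ℝ) ^ k / (k : ℝ) ^ k := div_pow _ _ _
    _ ≤ ((n + 1 - k : ℕ) : ℝ) ^ k / k.factorial := by
      gcongr
      exact_mod_cast Nat.factorial_le_pow k
    _ ≤ n.choose k := Nat.pow_le_choose k n

section fdom

variable {n k : ℕ} {p : ℝ}

lemma fdom_le (hp₀ : 0 ≤ p) (hp₁ : p ≤ 1) :
    fdom n k p ≤ n ^ k * exp (-((n - k : ℕ) * (1 - p) ^ k)) := by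
  have hq : (1 - p) ^ k ≤ 1 := pow_le_one₀ (by linarith) (by linarith)
  calc fdom n k p ≤ n ^ k * exp (-(1 - p) ^ k) ^ (n - k) := by
        unfold fdom
        gcongr
        · exact_mod_cast Nat.choose_le_pow n k
        · exact one_sub_le_exp_neg _
    _ = n ^ k * exp (-((n - k : ℕ) * (1 - p) ^ k)) := by rw [← exp_nat_mul]; ring_nf

lemma choose_mul_exp_le_fdom (hp : p ≤ 1) (hk : (1 - p) ^ k ≤ 1 / 2) :
    n.choose k * exp (-(2 * n * (1 - p) ^ k)) ≤ fdom n k p := by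
  have hq : 0 ≤ (1 - p) ^ k := pow_nonneg (by linarith) k
  have hnk : ((n - k : ℕ) : ℝ) ≤ n := by exact_mod_cast Nat.sub_le n k
  calc n.choose k * exp (-(2 * n * (1 - p) ^ k))
      ≤ n.choose k * exp (-(2 * (1 - p) ^ k)) ^ (n - k) := by
        rw [← exp_nat_mul]
        gcongr
        nlinarith
    _ ≤ fdom n k p := by
        unfold fdom
        gcongr
        exact exp_neg_two_mul_le_one_sub hq hk

lemma neg_log_lt_of_lt_fdom (hp₀ : 0 < p) (hp₁ : p ≤ 1) (hn : 0 < n)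
    (h : 1 / (p * n) < fdom n k p) :
    -log n < k * log n - (n - k : ℕ) * (1 - p) ^ k := by
  have hn' : (0 : ℝ) < n := by exact_mod_cast hn
  rw [← exp_lt_exp]
  calc exp (-log n) = 1 / (1 * n) := by rw [exp_neg, exp_log hn', one_mul, one_div]
    _ ≤ 1 / (p * n) := by gcongr
    _ < fdom n k p := h
    _ ≤ n ^ k * exp (-((n - k : ℕ) * (1 - p) ^ k)) := fdom_le hp₀.le hp₁
    _ = exp (k * log n - (n - k : ℕ) * (1 - p) ^ k) := by
        rw [exp_sub, exp_nat_mul, exp_log hn', exp_neg, div_eq_mul_inv]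

lemma rdom_le_of_lt_fdom (h : 1 / (p * n) < fdom n k p) : rdom n p ≤ k :=
  Nat.sInf_le h

lemma lt_fdom_rdom (h : 1 / (p * n) < fdom n k p) : 1 / (p * n) < fdom n (rdom n p) p :=
  Nat.sInf_mem (s := {k | fdom n k p > 1 / (p * n)}) ⟨k, h⟩

lemma fdom_le_of_lt_rdom (h : k < rdom n p) : fdom n k p ≤ 1 / (p * n) :=
  not_lt.1 (Nat.notMem_of_lt_sInf h)

end fdom

structure RdomRegime (ε : ℝ) (n : ℕ) (p : ℝ) : Prop where
  eps_pos : 0 < ε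
  pos : 0 < p
  le_one_sub : p ≤ 1 - ε
  log_sq_le : log n ^ 2 ≤ p * √n
  le_log : 16 / ε ≤ log n

namespace RdomRegime

variable {ε p : ℝ} {n : ℕ}

lemma eps_lt_one (h : RdomRegime ε n p) : ε < 1 := by linarith [h.pos, h.le_one_sub]

lemma lt_one (h : RdomRegime ε n p) : p < 1 := by linarith [h.eps_pos, h.le_one_sub]

lemma sixteen_le_log (h : RdomRegime ε n p) : 16 ≤ log n :=
  calc (16 : ℝ) ≤ 16 / ε := by rw [le_div_iff₀ h.eps_pos]; nlinarith [h.eps_lt_one]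
    _ ≤ log n := h.le_log

lemma sixteen_le_mul_log (h : RdomRegime ε n p) : 16 ≤ ε * log n :=
  (div_le_iff₀' h.eps_pos).1 h.le_log

lemma one_lt_natCast (h : RdomRegime ε n p) : (1 : ℝ) < n :=
  (log_pos_iff n.cast_nonneg).1 (by linarith [h.sixteen_le_log])

lemma sqrt_natCast_pos (h : RdomRegime ε n p) : 0 < √n :=
  sqrt_pos.2 (zero_lt_one.trans h.one_lt_natCast)

lemma log_sq_le_sqrt (h : RdomRegime ε n p) : log n ^ 2 ≤ √n := by
  nlinarith [h.log_sq_le, h.lt_one, sqrt_nonneg (n : ℝ)]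

lemma log_le_log_div (h : RdomRegime ε n p) : log n ≤ log n / p := by
  rw [le_div_iff₀ h.pos]
  nlinarith [h.lt_one, h.sixteen_le_log]

lemma log_div_le (h : RdomRegime ε n p) : log n / p ≤ √n / log n := by
  have := h.sixteen_le_log
  rw [div_le_div_iff₀ h.pos (by linarith)]
  nlinarith [h.log_sq_le]

lemma three_mul_log_div_le (h : RdomRegime ε n p) : 3 * log n / p ≤ √n / 2 := by
  have hL := h.sixteen_le_log
  calc 3 * log n / p = 3 * (log n / p) := mul_div_assoc _ _ _
    _ ≤ 3 * (√n / log n) := mul_le_mul_of_nonneg_left h.log_div_le (by norm_num)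
    _ ≤ √n / 2 := by
      rw [mul_div_assoc', div_le_div_iff₀ (by linarith) two_pos]
      nlinarith [sqrt_nonneg (n : ℝ)]

lemma sqrt_le_self (h : RdomRegime ε n p) : √n ≤ n :=
  calc √n ≤ √n * √n := le_mul_of_one_le_right (sqrt_nonneg _)
        (by nlinarith [h.log_sq_le_sqrt, h.sixteen_le_log])
    _ = n := mul_self_sqrt n.cast_nonneg

lemma four_lt_mul (h : RdomRegime ε n p) : 4 < p * n := by
  have := h.sixteen_le_log
  calc 4 < log n ^ 2 := by nlinarith
    _ ≤ p * √n := h.log_sq_le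
    _ ≤ p * √n * √n :=
        le_mul_of_one_le_right (by nlinarith [h.log_sq_le]) (by nlinarith [h.log_sq_le_sqrt])
    _ = p * n := by rw [mul_assoc, mul_self_sqrt n.cast_nonneg]

lemma exp_neg_two_mul_log (h : RdomRegime ε n p) : exp (-(2 * log n)) = ((n : ℝ) ^ 2)⁻¹ := by
  rw [exp_neg, sq, ← exp_log (zero_lt_one.trans h.one_lt_natCast), ← exp_add, log_exp]
  ring_nf

lemma ceil_le (h : RdomRegime ε n p) : (⌈2 * log n / p⌉₊ : ℝ) ≤ 3 * log n / p := by
  have := h.sixteen_le_log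
  calc (⌈2 * log n / p⌉₊ : ℝ) ≤ 2 * log n / p + 1 :=
        (Nat.ceil_lt_add_one (div_nonneg (by linarith) h.pos.le)).le
    _ ≤ 3 * log n / p := by
        rw [mul_div_assoc, mul_div_assoc]
        linarith [h.log_le_log_div]

lemma lt_fdom_ceil (h : RdomRegime ε n p) : 1 / (p * n) < fdom n ⌈2 * log n / p⌉₊ p := by
  set k := ⌈2 * log n / p⌉₊
  have hL := h.sixteen_le_log
  have hn := h.one_lt_natCast
  have hkL : 2 * log n ≤ k * p := (div_le_iff₀ h.pos).1 (Nat.le_ceil _)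
  have hk : (k : ℝ) ≤ n :=
    calc (k : ℝ) ≤ 3 * log n / p := h.ceil_le
      _ ≤ √n / 2 := h.three_mul_log_div_le
      _ ≤ n := by linarith [h.sqrt_le_self, sqrt_nonneg (n : ℝ)]
  have hq : (1 - p) ^ k ≤ ((n : ℝ) ^ 2)⁻¹ :=
    calc (1 - p) ^ k ≤ exp (-p) ^ k := by
          gcongr
          · linarith [h.lt_one]
          · exact one_sub_le_exp_neg p
      _ = exp (-(k * p)) := by rw [← exp_nat_mul]; ring_nf
      _ ≤ exp (-(2 * log n)) := by gcongr
      _ = ((n : ℝ) ^ 2)⁻¹ := h.exp_neg_two_mul_log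
  have hnq : 2 * n * (1 - p) ^ k ≤ 2 / n := by
    calc 2 * n * (1 - p) ^ k ≤ 2 * n * ((n : ℝ) ^ 2)⁻¹ := by gcongr
      _ = 2 / n := by field_simp
  have hpn := h.four_lt_mul
  have hn4 : 4 < (n : ℝ) := by nlinarith [h.lt_one]
  have hchoose : (1 : ℝ) ≤ n.choose k := by exact_mod_cast Nat.choose_pos (by exact_mod_cast hk)
  calc 1 / (p * n) < 1 / 4 := by gcongr
    _ ≤ 1 - 2 / n := by
        have : 2 / (n : ℝ) ≤ 1 / 2 := by rw [div_le_div_iff₀ (by positivity) two_pos]; linarith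
        linarith
    _ ≤ 1 * exp (-(2 * n * (1 - p) ^ k)) := by
        linarith [one_sub_le_exp_neg (2 * n * (1 - p) ^ k)]
    _ ≤ n.choose k * exp (-(2 * n * (1 - p) ^ k)) := by gcongr
    _ ≤ fdom n k p := choose_mul_exp_le_fdom h.lt_one.le (hq.trans (by
        rw [inv_le_comm₀ (by positivity) (by norm_num)]; nlinarith))

lemma rdom_le (h : RdomRegime ε n p) : (rdom n p : ℝ) ≤ 3 * log n / p :=
  (Nat.cast_le.2 (rdom_le_of_lt_fdom h.lt_fdom_ceil)).trans h.ceil_le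

lemma half_le_sub_rdom (h : RdomRegime ε n p) : (n : ℝ) / 2 ≤ ((n - rdom n p : ℕ) : ℝ) := by
  have hr : (rdom n p : ℝ) ≤ n / 2 := by
    linarith [h.rdom_le, h.three_mul_log_div_le, h.sqrt_le_self]
  have hrn : rdom n p ≤ n := by
    exact_mod_cast (hr.trans (by linarith [h.one_lt_natCast]) : (rdom n p : ℝ) ≤ n)
  rw [Nat.cast_sub hrn]
  linarith

lemma neg_log_lt (h : RdomRegime ε n p) :
    -log n < rdom n p * log n - (n - rdom n p : ℕ) * (1 - p) ^ rdom n p :=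
  neg_log_lt_of_lt_fdom h.pos h.lt_one.le (by exact_mod_cast zero_lt_one.trans h.one_lt_natCast)
    (lt_fdom_rdom h.lt_fdom_ceil)

lemma le_rdom (h : RdomRegime ε n p) : ε / 4 * log n / p ≤ rdom n p := by
  set r := rdom n p
  by_contra! hr
  have hL := h.sixteen_le_log
  have hrL : r * log n ≤ √n / 4 :=
    calc r * log n ≤ ε / 4 * log n / p * log n := by gcongr
      _ = ε / 4 * (log n ^ 2 / p) := by ring
      _ ≤ 1 / 4 * √n :=
        mul_le_mul (by linarith [h.eps_lt_one])
          (by rw [div_le_iff₀ h.pos]; linarith [h.log_sq_le])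
          (div_nonneg (sq_nonneg _) h.pos.le) (by norm_num)
      _ = √n / 4 := by ring
  have hq : exp (-(log n / 4)) ≤ (1 - p) ^ r :=
    calc exp (-(log n / 4)) ≤ exp (-(p / ε)) ^ r := by
          rw [← exp_nat_mul, exp_le_exp]
          have : r * p ≤ ε / 4 * log n := by
            rw [lt_div_iff₀ h.pos] at hr; linarith
          rw [mul_neg, neg_le_neg_iff, mul_div_assoc', div_le_iff₀ h.eps_pos]
          linarith
      _ ≤ (1 - p) ^ r := by
          gcongr
          exact exp_neg_div_le_one_sub h.eps_pos h.pos.le (by linarith [h.le_one_sub])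
  set x := exp (log n / 4)
  have hx5 : 5 ≤ x := by linarith [add_one_le_exp (log n / 4)]
  have hxL : log n ≤ 4 * x := by linarith [add_one_le_exp (log n / 4)]
  have hx4 : (n : ℝ) = x ^ 4 := by
    rw [← exp_nat_mul, Nat.cast_ofNat, mul_div_cancel₀ _ (by norm_num : (4 : ℝ) ≠ 0),
      exp_log (by linarith [h.one_lt_natCast])]
  have hx2 : √n = x ^ 2 := by
    rw [hx4, show x ^ 4 = (x ^ 2) ^ 2 by ring, sqrt_sq (by positivity)]
  have hxq : x ^ 3 / 2 ≤ (n - r : ℕ) * (1 - p) ^ r :=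
    calc x ^ 3 / 2 = (n : ℝ) / 2 * exp (-(log n / 4)) := by
          rw [show exp (-(log n / 4)) = x⁻¹ from exp_neg _, hx4]; field_simp
      _ ≤ (n - r : ℕ) * (1 - p) ^ r := by gcongr; exact h.half_le_sub_rdom
  have hx3 : 5 * x ^ 2 ≤ x ^ 3 := by nlinarith
  have hx2' : 4 * x ≤ x ^ 2 := by nlinarith
  linarith [h.neg_log_lt]

lemma one_sub_pow_rdom_le (h : RdomRegime ε n p) :
    (1 - p) ^ rdom n p ≤ 8 * log n ^ 2 / (p * n) := by
  set r := rdom n p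
  have hp := h.pos
  have hL := h.sixteen_le_log
  have hr : r * log n + log n ≤ 4 * (log n / p) * log n := by
    have : (r + 1 : ℝ) * log n ≤ 4 * (log n / p) * log n := by
      gcongr
      have := h.rdom_le
      rw [mul_div_assoc] at this
      linarith [h.log_le_log_div]
    linarith
  have hnr : (n : ℝ) / 2 * (1 - p) ^ r ≤ (n - r : ℕ) * (1 - p) ^ r :=
    mul_le_mul_of_nonneg_right h.half_le_sub_rdom (pow_nonneg (by linarith [h.lt_one]) r)
  rw [le_div_iff₀ (by linarith [h.four_lt_mul])]
  calc (1 - p) ^ r * (p * n) = 2 * p * ((n : ℝ) / 2 * (1 - p) ^ r) := by ring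
    _ ≤ 2 * p * (4 * (log n / p) * log n) :=
        mul_le_mul_of_nonneg_left (by linarith [h.neg_log_lt]) (by linarith)
    _ = 8 * log n ^ 2 := by field_simp; ring

lemma mul_log_le_of_fdom_le_one (h : RdomRegime ε n p) {k : ℕ} (hk₀ : 0 < k)
    (hk : (k : ℝ) ≤ √n / 2) (hq : (1 - p) ^ k ≤ 1 / 2) (hf : fdom n k p ≤ 1) :
    k * log n ≤ 4 * n * (1 - p) ^ k := by
  have hs0 := h.sqrt_natCast_pos
  have hk₀' : (0 : ℝ) < k := by exact_mod_cast hk₀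
  have hkn : k ≤ n + 1 := by
    exact_mod_cast (show (k : ℝ) ≤ n + 1 by linarith [h.sqrt_le_self])
  have hbase : √n ≤ ((n + 1 - k : ℕ) : ℝ) / k := by
    rw [le_div_iff₀ hk₀', Nat.cast_sub hkn]
    push_cast
    nlinarith [mul_self_sqrt (n.cast_nonneg : (0 : ℝ) ≤ n), h.sqrt_le_self]
  have hchoose : (n.choose k : ℝ) ≤ exp (2 * n * (1 - p) ^ k) := by
    have := (choose_mul_exp_le_fdom h.lt_one.le hq).trans hf
    rwa [exp_neg, ← div_eq_mul_inv, div_le_one (exp_pos _)] at this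
  have hexp : exp (k * (log n / 2)) ≤ exp (2 * n * (1 - p) ^ k) :=
    calc exp (k * (log n / 2)) = √n ^ k := by
          rw [exp_nat_mul, ← log_sqrt n.cast_nonneg, exp_log hs0]
      _ ≤ (((n + 1 - k : ℕ) : ℝ) / k) ^ k := by gcongr
      _ ≤ n.choose k := div_pow_le_choose n k
      _ ≤ exp (2 * n * (1 - p) ^ k) := hchoose
  linarith [exp_le_exp.1 hexp]

lemma four_le_rdom (h : RdomRegime ε n p) : (4 : ℝ) ≤ rdom n p := by
  calc (4 : ℝ) ≤ ε / 4 * log n := by linarith [h.sixteen_le_mul_log]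
    _ ≤ ε / 4 * log n / p := le_div_self (by linarith [h.sixteen_le_mul_log]) h.pos h.lt_one.le
    _ ≤ rdom n p := h.le_rdom

lemma mul_one_sub_pow_pred_rdom_le (h : RdomRegime ε n p) :
    ε * (1 - p) ^ (rdom n p - 1) ≤ (1 - p) ^ rdom n p := by
  have hr : 1 ≤ rdom n p := by exact_mod_cast (by linarith [h.four_le_rdom] : (1 : ℝ) ≤ rdom n p)
  conv_rhs => rw [← Nat.sub_add_cancel hr, pow_succ]
  rw [mul_comm]
  exact mul_le_mul_of_nonneg_left (by linarith [h.le_one_sub])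
    (pow_nonneg (by linarith [h.lt_one]) _)

lemma one_sub_pow_pred_rdom_le_half (h : RdomRegime ε n p) :
    (1 - p) ^ (rdom n p - 1) ≤ 1 / 2 := by
  have hL := h.sixteen_le_log
  have hs0 := h.sqrt_natCast_pos
  have h8 : 8 * log n ^ 2 / (p * n) ≤ 8 / √n := by
    rw [div_le_div_iff₀ (by linarith [h.four_lt_mul]) hs0]
    calc 8 * log n ^ 2 * √n ≤ 8 * (p * √n) * √n := by gcongr; exact h.log_sq_le
      _ = 8 * (p * (√n * √n)) := by ring
      _ = 8 * (p * n) := by rw [mul_self_sqrt n.cast_nonneg]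
  have h8' : 8 / √n ≤ ε / 2 := by
    have hLs : log n ≤ √n := by nlinarith [h.log_sq_le_sqrt]
    rw [div_le_div_iff₀ hs0 two_pos]
    nlinarith [mul_le_mul_of_nonneg_left hLs h.eps_pos.le, h.sixteen_le_mul_log]
  nlinarith [h.one_sub_pow_rdom_le, h.mul_one_sub_pow_pred_rdom_le, h.eps_pos]

lemma le_one_sub_pow_rdom (h : RdomRegime ε n p) :
    ε ^ 2 / 32 * log n ^ 2 / (p * n) ≤ (1 - p) ^ rdom n p := by
  set r := rdom n p
  have hp := h.pos
  have hL := h.sixteen_le_log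
  have hpn : 0 < p * n := by linarith [h.four_lt_mul]
  have hr := h.four_le_rdom
  have hr2 : 2 ≤ r := by exact_mod_cast (by linarith : (2 : ℝ) ≤ r)
  have hk : ((r - 1 : ℕ) : ℝ) = r - 1 := by rw [Nat.cast_sub (by omega), Nat.cast_one]
  have hf : fdom n (r - 1) p ≤ 1 :=
    (fdom_le_of_lt_rdom (by omega)).trans (by rw [div_le_one hpn]; linarith [h.four_lt_mul])
  have hkL := h.mul_log_le_of_fdom_le_one (by omega)
    (by linarith [h.rdom_le, h.three_mul_log_div_le]) h.one_sub_pow_pred_rdom_le_half hf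
  have hk2 : ε / 8 * log n / p * log n ≤ 4 * n * (1 - p) ^ (r - 1) := by
    refine le_trans (mul_le_mul_of_nonneg_right ?_ (by linarith)) hkL
    rw [hk]
    linarith [h.le_rdom, show ε / 8 * log n / p = (ε / 4 * log n / p) / 2 by ring]
  rw [div_le_iff₀ hpn]
  calc ε ^ 2 / 32 * log n ^ 2 = ε / 4 * (ε / 8 * log n / p * log n) * p := by
        field_simp; ring
    _ ≤ ε / 4 * (4 * n * (1 - p) ^ (r - 1)) * p :=
        mul_le_mul_of_nonneg_right (mul_le_mul_of_nonneg_left hk2 (by linarith [h.eps_pos])) hp.le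
    _ = ε * (1 - p) ^ (r - 1) * (p * n) := by ring
    _ ≤ (1 - p) ^ r * (p * n) := mul_le_mul_of_nonneg_right h.mul_one_sub_pow_pred_rdom_le hpn.le

lemma rdom_mul_log_div_sqrt_le (h : RdomRegime ε n p) :
    rdom n p * log n / √n ≤ 3 * (log n ^ 2 / (p * √n)) := by
  have hp := h.pos
  have hL := h.sixteen_le_log
  have hs0 := h.sqrt_natCast_pos
  calc rdom n p * log n / √n ≤ 3 * log n / p * log n / √n := by
        gcongr
        exact h.rdom_le
    _ = 3 * (log n ^ 2 / (p * √n)) := by ring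

end RdomRegime

lemma eventually_rdomRegime {ε : ℝ} (hε : 0 < ε) {p : ℕ → ℝ} (hp : ∀ n, 0 < p n)
    (hple : Tendsto (fun n : ℕ => p n * √n / log n ^ 2) atTop atTop)
    (hpe : ∀ᶠ n : ℕ in atTop, p n ≤ 1 - ε) : ∀ᶠ n : ℕ in atTop, RdomRegime ε n (p n) := by
  have hlog : Tendsto (fun n : ℕ => log n) atTop atTop :=
    tendsto_log_atTop.comp tendsto_natCast_atTop_atTop
  filter_upwards [hple.eventually_ge_atTop 1, hlog.eventually_ge_atTop (16 / ε), hpe]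
    with n h1 hL hpn
  have : 0 < log n := (by positivity : 0 < 16 / ε).trans_le hL
  exact ⟨hε, hp n, hpn, by rwa [le_div_iff₀ (by positivity), one_mul] at h1, hL⟩

/-- If `p_n √n / log² n → ∞` and eventually `p_n ≤ 1−ε`, then
`r_n = Θ(log n / p_n)` and `(1−p_n)^{r_n} = Θ(log² n/(p_n n))`; in particular
`r_n = Ω(log n)` and `r_n log n / √n → 0`. -/
theorem rdom_order (ε : ℝ) (hε : 0 < ε) (p : ℕ → ℝ)
    (hp01 : ∀ n, p n ∈ Set.Ioo (0 : ℝ) 1)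
    (hple : Tendsto (fun n : ℕ => p n * Real.sqrt n / (Real.log n) ^ 2) atTop atTop)
    (hpe : ∀ᶠ n : ℕ in atTop, p n ≤ 1 - ε) :
    ∃ c C : ℝ, 0 < c ∧ c < C ∧
      (∀ᶠ n : ℕ in atTop,
        c * Real.log n / p n ≤ (rdom n (p n) : ℝ) ∧
        (rdom n (p n) : ℝ) ≤ C * Real.log n / p n ∧
        c * (Real.log n) ^ 2 / (p n * n) ≤ (1 - p n) ^ (rdom n (p n)) ∧
        (1 - p n) ^ (rdom n (p n)) ≤ C * (Real.log n) ^ 2 / (p n * n) ∧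
        c * Real.log n ≤ (rdom n (p n) : ℝ)) ∧
      Tendsto (fun n : ℕ => (rdom n (p n) : ℝ) * Real.log n / Real.sqrt n) atTop (𝓝 0) := by
  have hreg := eventually_rdomRegime hε (fun n => (hp01 n).1) hple hpe
  obtain ⟨_, hm⟩ := hreg.exists
  have hε1 := hm.eps_lt_one
  have hc : ε ^ 2 / 32 ≤ ε / 4 := by nlinarith
  refine ⟨ε ^ 2 / 32, 8, by positivity, by nlinarith, ?_, ?_⟩
  · filter_upwards [hreg] with n h
    have hL := h.sixteen_le_log
    have hp := h.pos.le
    have hcr : ε ^ 2 / 32 * log n / p n ≤ rdom n (p n) :=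
      le_trans (by gcongr) h.le_rdom
    refine ⟨hcr, h.rdom_le.trans (by gcongr; norm_num), h.le_one_sub_pow_rdom,
      h.one_sub_pow_rdom_le, le_trans ?_ hcr⟩
    rw [mul_div_assoc]
    exact mul_le_mul_of_nonneg_left h.log_le_log_div (by positivity)
  · refine squeeze_zero' ?_ ?_ (by simpa using hple.inv_tendsto_atTop.const_mul 3)
    · filter_upwards [hreg] with n h
      have := h.sixteen_le_log
      positivity
    · filter_upwards [hreg] with n h using h.rdom_mul_log_div_sqrt_le
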